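/- Let H : ℝ⁴ → ℝ², H(x,y,z,w) = (xz(x² + y² + z² + w²), yz(x² + y² + z² + w²)), the composition of F(x,y,z,w) = (x, y, z(x² + y² + z² + w²)) with G(u,v,t) = (ut, vt). Then Sing H = {z = 0}, M(H) = {z = 0} ∪ {w = 0, z² = x² + y²}, and H is tame (even though Sing G = {t = 0} has positive dimension). -/

import Mathlib

open Metric Set Function Topology

noncomputable section

/-- The singular set of a map: points where the total derivative is not surjective. -/
def Sing {E F : Type*} [NormedAddCommGroup E] [NormedSpace ℝ E] [NormedAddCommGroup F]
    [NormedSpace ℝ F] (P : E → F) : Set E :=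
  {x | ¬ Function.Surjective ⇑(fderiv ℝ P x)}

/-- The Milnor set of a map (with respect to the Euclidean distance `‖x‖²`):
points where the derivative of `x ↦ (P x, ‖x‖²)` is not surjective. -/
def MilnorSet {E F : Type*} [NormedAddCommGroup E] [NormedSpace ℝ E] [NormedAddCommGroup F]
    [NormedSpace ℝ F] (P : E → F) : Set E :=
  {x | ¬ Function.Surjective ⇑(fderiv ℝ (fun y => (P y, ‖y‖ ^ 2)) x)}

/-- Tameness: as set germs at the origin, `closure(M(P) \ Sing P) ∩ Sing P ⊆ {0}`. -/
def Tame {E F : Type*} [NormedAddCommGroup E] [NormedSpace ℝ E] [NormedAddCommGroup F]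
    [NormedSpace ℝ F] (P : E → F) : Prop :=
  ∃ ε > 0, closure ((MilnorSet P \ Sing P) ∩ ball (0 : E) ε) ∩ Sing P ∩ ball (0 : E) ε ⊆ {0}

/-- F(x,y,z,w) = (x, y, z(x² + y² + z² + w²)). -/
def F19 : EuclideanSpace ℝ (Fin 4) → EuclideanSpace ℝ (Fin 3) :=
  fun x => (WithLp.equiv 2 (Fin 3 → ℝ)).symm
    ![x 0, x 1, x 2 * ((x 0) ^ 2 + (x 1) ^ 2 + (x 2) ^ 2 + (x 3) ^ 2)]

/-- G(u,v,t) = (ut, vt). -/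
def G19 : EuclideanSpace ℝ (Fin 3) → EuclideanSpace ℝ (Fin 2) :=
  fun u => (WithLp.equiv 2 (Fin 2 → ℝ)).symm ![u 0 * u 2, u 1 * u 2]

/-- H(x,y,z,w) = (xz(x² + y² + z² + w²), yz(x² + y² + z² + w²)). -/
def H19 : EuclideanSpace ℝ (Fin 4) → EuclideanSpace ℝ (Fin 2) :=
  fun x => (WithLp.equiv 2 (Fin 2 → ℝ)).symm
    ![x 0 * (x 2 * ((x 0) ^ 2 + (x 1) ^ 2 + (x 2) ^ 2 + (x 3) ^ 2)),
      x 1 * (x 2 * ((x 0) ^ 2 + (x 1) ^ 2 + (x 2) ^ 2 + (x 3) ^ 2))]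

abbrev E4 : Type := EuclideanSpace ℝ (Fin 4)
abbrev E3 : Type := EuclideanSpace ℝ (Fin 3)
abbrev E2 : Type := EuclideanSpace ℝ (Fin 2)

def lin4 (a b c d : ℝ) : E4 →L[ℝ] ℝ :=
  a • (EuclideanSpace.proj 0 : E4 →L[ℝ] ℝ) + b • (EuclideanSpace.proj 1 : E4 →L[ℝ] ℝ)
  + c • (EuclideanSpace.proj 2 : E4 →L[ℝ] ℝ) + d • (EuclideanSpace.proj 3 : E4 →L[ℝ] ℝ)

@[simp] lemma lin4_apply (a b c d : ℝ) (v : E4) :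
    lin4 a b c d v = a * v 0 + b * v 1 + c * v 2 + d * v 3 := by
  simp [lin4]

def lin3 (a b c : ℝ) : E3 →L[ℝ] ℝ :=
  a • (EuclideanSpace.proj 0 : E3 →L[ℝ] ℝ) + b • (EuclideanSpace.proj 1 : E3 →L[ℝ] ℝ)
  + c • (EuclideanSpace.proj 2 : E3 →L[ℝ] ℝ)

@[simp] lemma lin3_apply (a b c : ℝ) (v : E3) :
    lin3 a b c v = a * v 0 + b * v 1 + c * v 2 := by
  simp [lin3]

def vec4 (a b c d : ℝ) : E4 := (WithLp.equiv 2 (Fin 4 → ℝ)).symm ![a, b, c, d]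
@[simp] lemma vec4_0 (a b c d : ℝ) : vec4 a b c d 0 = a := rfl
@[simp] lemma vec4_1 (a b c d : ℝ) : vec4 a b c d 1 = b := rfl
@[simp] lemma vec4_2 (a b c d : ℝ) : vec4 a b c d 2 = c := rfl
@[simp] lemma vec4_3 (a b c d : ℝ) : vec4 a b c d 3 = d := rfl

def vec3 (a b c : ℝ) : E3 := (WithLp.equiv 2 (Fin 3 → ℝ)).symm ![a, b, c]
@[simp] lemma vec3_0 (a b c : ℝ) : vec3 a b c 0 = a := rfl
@[simp] lemma vec3_1 (a b c : ℝ) : vec3 a b c 1 = b := rfl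
@[simp] lemma vec3_2 (a b c : ℝ) : vec3 a b c 2 = c := rfl

def pair2 {E : Type*} [NormedAddCommGroup E] [NormedSpace ℝ E] (L0 L1 : E →L[ℝ] ℝ) :
    E →L[ℝ] E2 :=
  ((PiLp.continuousLinearEquiv 2 ℝ (fun _ : Fin 2 => ℝ)).symm :
      (Fin 2 → ℝ) →L[ℝ] E2).comp (ContinuousLinearMap.pi ![L0, L1])

@[simp] lemma pair2_apply0 {E : Type*} [NormedAddCommGroup E] [NormedSpace ℝ E]
    (L0 L1 : E →L[ℝ] ℝ) (v : E) : pair2 L0 L1 v 0 = L0 v := rfl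
@[simp] lemma pair2_apply1 {E : Type*} [NormedAddCommGroup E] [NormedSpace ℝ E]
    (L0 L1 : E →L[ℝ] ℝ) (v : E) : pair2 L0 L1 v 1 = L1 v := rfl

lemma hasFDerivAt_pair2 {E : Type*} [NormedAddCommGroup E] [NormedSpace ℝ E]
    {f0 f1 : E → ℝ} {L0 L1 : E →L[ℝ] ℝ} {x : E}
    (h0 : HasFDerivAt f0 L0 x) (h1 : HasFDerivAt f1 L1 x) :
    HasFDerivAt (fun y => (WithLp.equiv 2 (Fin 2 → ℝ)).symm ![f0 y, f1 y]) (pair2 L0 L1) x := by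
  have hp : HasFDerivAt (fun y => (![f0 y, f1 y] : Fin 2 → ℝ)) (ContinuousLinearMap.pi ![L0, L1]) x := by
    have heq : (fun y => (![f0 y, f1 y] : Fin 2 → ℝ)) = (fun y i => ![f0, f1] i y) := by
      funext y i; fin_cases i <;> rfl
    rw [heq]
    refine hasFDerivAt_pi.2 fun i => ?_
    fin_cases i <;> simpa
  have h2 := ((PiLp.continuousLinearEquiv 2 ℝ (fun _ : Fin 2 => ℝ)).symm.hasFDerivAt).comp x hp
  exact h2

def rho (x : E4) : ℝ := (x 0) ^ 2 + (x 1) ^ 2 + (x 2) ^ 2 + (x 3) ^ 2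

def DH (x : E4) : E4 →L[ℝ] E2 :=
  pair2
    (lin4 (x 2 * rho x + 2 * (x 0) ^ 2 * x 2) (2 * x 0 * x 1 * x 2)
      (x 0 * rho x + 2 * x 0 * (x 2) ^ 2) (2 * x 0 * x 2 * x 3))
    (lin4 (2 * x 0 * x 1 * x 2) (x 2 * rho x + 2 * (x 1) ^ 2 * x 2)
      (x 1 * rho x + 2 * x 1 * (x 2) ^ 2) (2 * x 1 * x 2 * x 3))

lemma hproj (x : E4) (i : Fin 4) :
    HasFDerivAt (fun y : E4 => y i) (EuclideanSpace.proj i : E4 →L[ℝ] ℝ) x :=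
  (EuclideanSpace.proj i : E4 →L[ℝ] ℝ).hasFDerivAt

lemma hproj3 (x : E3) (i : Fin 3) :
    HasFDerivAt (fun y : E3 => y i) (EuclideanSpace.proj i : E3 →L[ℝ] ℝ) x :=
  (EuclideanSpace.proj i : E3 →L[ℝ] ℝ).hasFDerivAt

lemma hasFDerivAt_H19 (x : E4) : HasFDerivAt H19 (DH x) x := by
  have h := hproj x
  have hρ : HasFDerivAt (fun y : E4 => (y 0) ^ 2 + (y 1) ^ 2 + (y 2) ^ 2 + (y 3) ^ 2)
      (lin4 (2 * x 0) (2 * x 1) (2 * x 2) (2 * x 3)) x := by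
    have heq : (fun y : E4 => (y 0) ^ 2 + (y 1) ^ 2 + (y 2) ^ 2 + (y 3) ^ 2)
        = fun y : E4 => y 0 * y 0 + y 1 * y 1 + y 2 * y 2 + y 3 * y 3 := by
      funext y; ring
    rw [heq]
    refine ((((h 0).mul (h 0)).add ((h 1).mul (h 1))).add ((h 2).mul (h 2)) |>.add
      ((h 3).mul (h 3))).congr_fderiv ?_
    ext v; simp; ring
  have h0 : HasFDerivAt (fun y : E4 => y 0 * (y 2 * ((y 0) ^ 2 + (y 1) ^ 2 + (y 2) ^ 2 + (y 3) ^ 2)))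
      (lin4 (x 2 * rho x + 2 * (x 0) ^ 2 * x 2) (2 * x 0 * x 1 * x 2)
        (x 0 * rho x + 2 * x 0 * (x 2) ^ 2) (2 * x 0 * x 2 * x 3)) x := by
    refine ((h 0).mul ((h 2).mul hρ)).congr_fderiv ?_
    ext v; simp [rho]; ring
  have h1 : HasFDerivAt (fun y : E4 => y 1 * (y 2 * ((y 0) ^ 2 + (y 1) ^ 2 + (y 2) ^ 2 + (y 3) ^ 2)))
      (lin4 (2 * x 0 * x 1 * x 2) (x 2 * rho x + 2 * (x 1) ^ 2 * x 2)
        (x 1 * rho x + 2 * x 1 * (x 2) ^ 2) (2 * x 1 * x 2 * x 3)) x := by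
    refine ((h 1).mul ((h 2).mul hρ)).congr_fderiv ?_
    ext v; simp [rho]; ring
  exact hasFDerivAt_pair2 h0 h1

def DG (u : E3) : E3 →L[ℝ] E2 :=
  pair2 (lin3 (u 2) 0 (u 0)) (lin3 0 (u 2) (u 1))

lemma hasFDerivAt_G19 (u : E3) : HasFDerivAt G19 (DG u) u := by
  have h := hproj3 u
  have h0 : HasFDerivAt (fun y : E3 => y 0 * y 2) (lin3 (u 2) 0 (u 0)) u := by
    refine ((h 0).mul (h 2)).congr_fderiv ?_
    ext v; simp; ring
  have h1 : HasFDerivAt (fun y : E3 => y 1 * y 2) (lin3 0 (u 2) (u 1)) u := by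
    refine ((h 1).mul (h 2)).congr_fderiv ?_
    ext v; simp; ring
  exact hasFDerivAt_pair2 h0 h1

lemma norm_sq_E4 (x : E4) : ‖x‖ ^ 2 = (x 0) ^ 2 + (x 1) ^ 2 + (x 2) ^ 2 + (x 3) ^ 2 := by
  rw [EuclideanSpace.norm_eq, Real.sq_sqrt (by positivity)]
  simp [Fin.sum_univ_four, sq_abs]

def DM (x : E4) : E4 →L[ℝ] E2 × ℝ :=
  (DH x).prod (lin4 (2 * x 0) (2 * x 1) (2 * x 2) (2 * x 3))

lemma hasFDerivAt_M19 (x : E4) :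
    HasFDerivAt (fun y : E4 => (H19 y, ‖y‖ ^ 2)) (DM x) x := by
  have h := hproj x
  have hN : HasFDerivAt (fun y : E4 => ‖y‖ ^ 2)
      (lin4 (2 * x 0) (2 * x 1) (2 * x 2) (2 * x 3)) x := by
    have heq : (fun y : E4 => ‖y‖ ^ 2)
        = fun y : E4 => (y 0) ^ 2 + (y 1) ^ 2 + (y 2) ^ 2 + (y 3) ^ 2 := funext norm_sq_E4
    have heq2 : (fun y : E4 => (y 0) ^ 2 + (y 1) ^ 2 + (y 2) ^ 2 + (y 3) ^ 2)
        = fun y : E4 => y 0 * y 0 + y 1 * y 1 + y 2 * y 2 + y 3 * y 3 := by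
      funext y; ring
    rw [heq, heq2]
    refine ((((h 0).mul (h 0)).add ((h 1).mul (h 1))).add ((h 2).mul (h 2)) |>.add
      ((h 3).mul (h 3))).congr_fderiv ?_
    ext v; simp; ring
  exact (hasFDerivAt_H19 x).prodMk hN

def vec2 (a b : ℝ) : E2 := (WithLp.equiv 2 (Fin 2 → ℝ)).symm ![a, b]
@[simp] lemma vec2_0 (a b : ℝ) : vec2 a b 0 = a := rfl
@[simp] lemma vec2_1 (a b : ℝ) : vec2 a b 1 = b := rfl

lemma singG_eq : {u : E3 | ¬ Surjective ⇑(fderiv ℝ G19 u)} = {u : E3 | u 2 = 0} := by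
  ext u
  simp only [mem_setOf_eq, (hasFDerivAt_G19 u).fderiv]
  constructor
  · intro hns
    by_contra hu
    apply hns
    intro t
    refine ⟨vec3 (t 0 / u 2) (t 1 / u 2) 0, ?_⟩
    ext i
    fin_cases i
    · show (DG u) _ 0 = t 0
      simp [DG]
      field_simp
    · show (DG u) _ 1 = t 1
      simp [DG]
      field_simp
  · intro hu hs
    obtain ⟨v, hv⟩ := hs (vec2 1 0)
    obtain ⟨w, hw⟩ := hs (vec2 0 1)
    have e1 : u 0 * v 2 = 1 := by
      have := congrArg (fun f => f 0) hv
      simp [DG, hu] at this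
      linarith [this]
    have e2 : u 1 * v 2 = 0 := by
      have := congrArg (fun f => f 1) hv
      simp [DG, hu] at this
      rcases this with h | h <;> simp [h]
    have e3 : u 0 * w 2 = 0 := by
      have := congrArg (fun f => f 0) hw
      simp [DG, hu] at this
      rcases this with h | h <;> simp [h]
    have e4 : u 1 * w 2 = 1 := by
      have := congrArg (fun f => f 1) hw
      simp [DG, hu] at this
      linarith [this]
    have : (1 : ℝ) = 0 := by
      calc (1 : ℝ) = (u 0 * v 2) * (u 1 * w 2) := by rw [e1, e4]; ring
      _ = (u 1 * v 2) * (u 0 * w 2) := by ring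
      _ = 0 := by rw [e2, e3]; ring
    exact one_ne_zero this

lemma rho_pos (x : E4) (h : x 2 ≠ 0) : 0 < rho x := by
  have h2 : 0 < (x 2) ^ 2 := by positivity
  have := sq_nonneg (x 0); have := sq_nonneg (x 1); have := sq_nonneg (x 3)
  simp only [rho]; nlinarith

lemma singH_eq : {x : E4 | ¬ Surjective ⇑(fderiv ℝ H19 x)} = {x : E4 | x 2 = 0} := by
  ext x
  simp only [mem_setOf_eq, (hasFDerivAt_H19 x).fderiv]
  constructor
  · intro hns
    by_contra hz
    apply hns
    intro t
    have hρ : 0 < rho x := rho_pos x hz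
    have hd : (x 2) ^ 2 * rho x * (rho x + 2 * (x 0) ^ 2 + 2 * (x 1) ^ 2) ≠ 0 := by
      have : 0 < rho x + 2 * (x 0) ^ 2 + 2 * (x 1) ^ 2 := by positivity
      positivity
    set d := (x 2) ^ 2 * rho x * (rho x + 2 * (x 0) ^ 2 + 2 * (x 1) ^ 2) with hdd
    refine ⟨vec4 (((x 2 * rho x + 2 * (x 1) ^ 2 * x 2) * t 0 - 2 * x 0 * x 1 * x 2 * t 1) / d)
      ((-(2 * x 0 * x 1 * x 2) * t 0 + (x 2 * rho x + 2 * (x 0) ^ 2 * x 2) * t 1) / d) 0 0, ?_⟩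
    ext i
    fin_cases i
    · show (DH x) _ 0 = t 0
      simp only [DH, pair2_apply0, lin4_apply, vec4_0, vec4_1, vec4_2, vec4_3]
      field_simp
      ring
    · show (DH x) _ 1 = t 1
      simp only [DH, pair2_apply1, lin4_apply, vec4_0, vec4_1, vec4_2, vec4_3]
      field_simp
      ring
  · intro hz hs
    obtain ⟨v, hv⟩ := hs (vec2 1 0)
    obtain ⟨w, hw⟩ := hs (vec2 0 1)
    have e1 : x 0 * rho x * v 2 = 1 := by
      have := congrArg (fun f => f 0) hv
      simp [DH, hz] at this
      linarith [this]
    have e2 : x 1 * rho x * v 2 = 0 := by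
      have := congrArg (fun f => f 1) hv
      simp [DH, hz] at this
      rcases this with h | h <;> simp [h]
    have e3 : x 0 * rho x * w 2 = 0 := by
      have := congrArg (fun f => f 0) hw
      simp [DH, hz] at this
      rcases this with h | h <;> simp [h]
    have e4 : x 1 * rho x * w 2 = 1 := by
      have := congrArg (fun f => f 1) hw
      simp [DH, hz] at this
      linarith [this]
    have : (1 : ℝ) = 0 := by
      calc (1 : ℝ) = (x 0 * rho x * v 2) * (x 1 * rho x * w 2) := by rw [e1, e4]; ring
      _ = (x 1 * rho x * v 2) * (x 0 * rho x * w 2) := by ring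
      _ = 0 := by rw [e2, e3]; ring
    exact one_ne_zero this

lemma notSurjDH (x : E4) (hz : x 2 = 0) : ¬ Surjective ⇑(DH x) := by
  intro hs
  obtain ⟨v, hv⟩ := hs (vec2 1 0)
  obtain ⟨w, hw⟩ := hs (vec2 0 1)
  have e1 : x 0 * rho x * v 2 = 1 := by
    have := congrArg (fun f => f 0) hv
    simp [DH, hz] at this
    linarith [this]
  have e2 : x 1 * rho x * v 2 = 0 := by
    have := congrArg (fun f => f 1) hv
    simp [DH, hz] at this
    rcases this with h | h <;> simp [h]
  have e3 : x 0 * rho x * w 2 = 0 := by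
    have := congrArg (fun f => f 0) hw
    simp [DH, hz] at this
    rcases this with h | h <;> simp [h]
  have e4 : x 1 * rho x * w 2 = 1 := by
    have := congrArg (fun f => f 1) hw
    simp [DH, hz] at this
    linarith [this]
  have : (1 : ℝ) = 0 := by
    calc (1 : ℝ) = (x 0 * rho x * v 2) * (x 1 * rho x * w 2) := by rw [e1, e4]; ring
    _ = (x 1 * rho x * v 2) * (x 0 * rho x * w 2) := by ring
    _ = 0 := by rw [e2, e3]; ring
  exact one_ne_zero this

@[simp] lemma DM_apply (x : E4) (v : E4) :
    DM x v = (DH x v, lin4 (2 * x 0) (2 * x 1) (2 * x 2) (2 * x 3) v) := rfl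

set_option maxHeartbeats 1000000 in
lemma milnorH_eq : {x : E4 | ¬ Surjective ⇑(fderiv ℝ (fun y : E4 => (H19 y, ‖y‖ ^ 2)) x)}
    = {x : E4 | x 2 = 0} ∪
      {x : E4 | x 3 = 0 ∧ (x 2) ^ 2 = (x 0) ^ 2 + (x 1) ^ 2} := by
  ext x
  simp only [mem_union, mem_setOf_eq, (hasFDerivAt_M19 x).fderiv]
  constructor
  · intro hns
    by_contra hcon
    push_neg at hcon
    obtain ⟨hz, hwc⟩ := hcon
    apply hns
    by_cases hw3 : x 3 = 0
    case neg =>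
      rename' hw3 => hw
      rintro ⟨t, r⟩
      have hρ : 0 < rho x := rho_pos x hz
      refine ⟨vec4 ((t 0 - x 0 * x 2 * r) / (x 2 * rho x))
        ((t 1 - x 1 * x 2 * r) / (x 2 * rho x)) 0
        ((r - 2 * x 0 * ((t 0 - x 0 * x 2 * r) / (x 2 * rho x))
            - 2 * x 1 * ((t 1 - x 1 * x 2 * r) / (x 2 * rho x))) / (2 * x 3)), ?_⟩
      rw [DM_apply, Prod.mk.injEq]
      constructor
      · ext i
        fin_cases i
        · show (DH x) _ 0 = t 0
          simp only [DH, pair2_apply0, lin4_apply, vec4_0, vec4_1, vec4_2, vec4_3, rho]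
          have hρ' : (x 0) ^ 2 + (x 1) ^ 2 + (x 2) ^ 2 + (x 3) ^ 2 ≠ 0 := by
            have := hρ; simp only [rho] at this; linarith
          field_simp [rho, hz, hw, hρ']
          ring
        · show (DH x) _ 1 = t 1
          simp only [DH, pair2_apply1, lin4_apply, vec4_0, vec4_1, vec4_2, vec4_3, rho]
          have hρ' : (x 0) ^ 2 + (x 1) ^ 2 + (x 2) ^ 2 + (x 3) ^ 2 ≠ 0 := by
            have := hρ; simp only [rho] at this; linarith
          field_simp [rho, hz, hw, hρ']
          ring
      · simp only [lin4_apply, vec4_0, vec4_1, vec4_2, vec4_3]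
        have hρ' : (x 0) ^ 2 + (x 1) ^ 2 + (x 2) ^ 2 + (x 3) ^ 2 ≠ 0 := by
          have := hρ; simp only [rho] at hρ; linarith
        field_simp [rho, hz, hw, hρ']
        ring
    case pos =>
      have hP := hwc hw3
      rintro ⟨t, r⟩
      have hρ : 0 < rho x := rho_pos x hz
      have hQ : (x 2) ^ 2 - (x 0) ^ 2 - (x 1) ^ 2 ≠ 0 := fun h => hP (by linarith)
      set v2 : ℝ := (x 2 * r * (rho x + 2 * (x 0) ^ 2 + 2 * (x 1) ^ 2)
          - 2 * x 0 * t 0 - 2 * x 1 * t 1)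
          / (2 * rho x * ((x 2) ^ 2 - (x 0) ^ 2 - (x 1) ^ 2)) with hv2
      refine ⟨vec4 ((t 0 - x 0 * x 2 * r - x 0 * rho x * v2) / (x 2 * rho x))
        ((t 1 - x 1 * x 2 * r - x 1 * rho x * v2) / (x 2 * rho x)) v2 0, ?_⟩
      rw [DM_apply, Prod.mk.injEq]
      have hρ' : (x 0) ^ 2 + (x 1) ^ 2 + (x 2) ^ 2 + (x 3) ^ 2 ≠ 0 := by
        have := hρ; simp only [rho] at this; linarith
      constructor
      · ext i
        fin_cases i
        · show (DH x) _ 0 = t 0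
          simp only [DH, pair2_apply0, lin4_apply, vec4_0, vec4_1, vec4_2, vec4_3, hv2, rho]
          field_simp [rho, hz, hQ, hρ']
          ring
        · show (DH x) _ 1 = t 1
          simp only [DH, pair2_apply1, lin4_apply, vec4_0, vec4_1, vec4_2, vec4_3, hv2, rho]
          field_simp [rho, hz, hQ, hρ']
          ring
      · simp only [lin4_apply, vec4_0, vec4_1, vec4_2, vec4_3, hv2, rho]
        field_simp [rho, hz, hQ, hρ']
        ring
  · rintro (hz | ⟨hw, hc⟩)
    · intro hs
      have hs' : Surjective (Prod.fst ∘ ⇑(DM x)) := Prod.fst_surjective.comp hs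
      exact notSurjDH x hz hs'
    · by_cases hz : x 2 = 0
      · intro hs
        have hs' : Surjective (Prod.fst ∘ ⇑(DM x)) := Prod.fst_surjective.comp hs
        exact notSurjDH x hz hs'
      intro hs
      obtain ⟨v, hv⟩ := hs (vec2 0 0, 1)
      rw [DM_apply, Prod.mk.injEq] at hv
      obtain ⟨hv1, e3⟩ := hv
      have e1 : (x 2 * rho x + 2 * (x 0) ^ 2 * x 2) * v 0 + 2 * x 0 * x 1 * x 2 * v 1
          + (x 0 * rho x + 2 * x 0 * (x 2) ^ 2) * v 2 + 2 * x 0 * x 2 * x 3 * v 3 = 0 := by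
        have := congrArg (fun f => f 0) hv1
        simpa [DH] using this
      have e2 : 2 * x 0 * x 1 * x 2 * v 0 + (x 2 * rho x + 2 * (x 1) ^ 2 * x 2) * v 1
          + (x 1 * rho x + 2 * x 1 * (x 2) ^ 2) * v 2 + 2 * x 1 * x 2 * x 3 * v 3 = 0 := by
        have := congrArg (fun f => f 1) hv1
        simpa [DH] using this
      have e3' : 2 * x 0 * v 0 + 2 * x 1 * v 1 + 2 * x 2 * v 2 + 2 * x 3 * v 3 = 1 := by
        simpa using e3
      simp only [rho] at e1 e2
      have key : x 2 * ((x 0) ^ 2 + (x 1) ^ 2 + (x 2) ^ 2 + (x 3) ^ 2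
          + 2 * (x 0) ^ 2 + 2 * (x 1) ^ 2) = 0 := by
        linear_combination (2 * x 0) * e1 + (2 * x 1) * e2
          + (-(x 2 * ((x 0) ^ 2 + (x 1) ^ 2 + (x 2) ^ 2 + (x 3) ^ 2
              + 2 * (x 0) ^ 2 + 2 * (x 1) ^ 2))) * e3'
          + (-(2 * ((x 0) ^ 2 + (x 1) ^ 2 + (x 2) ^ 2 + (x 3) ^ 2)) * v 2) * hc.symm
          + (2 * x 2 * ((x 0) ^ 2 + (x 1) ^ 2 + (x 2) ^ 2 + (x 3) ^ 2) * v 3) * hw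
      have hT : 0 < (x 0) ^ 2 + (x 1) ^ 2 + (x 2) ^ 2 + (x 3) ^ 2
          + 2 * (x 0) ^ 2 + 2 * (x 1) ^ 2 := by
        have h2 : 0 < (x 2) ^ 2 := by positivity
        nlinarith [sq_nonneg (x 0), sq_nonneg (x 1), sq_nonneg (x 3)]
      exact hz (by
        rcases mul_eq_zero.mp key with h | h
        · exact h
        · linarith)

/-- For H = G ∘ F as above, Sing H = {z = 0},
M(H) = {z = 0} ∪ {w = 0, z² = x² + y²}, and H is tame
(even though Sing G = {t = 0} has positive dimension). -/
theorem stmt_19 :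
    H19 = G19 ∘ F19 ∧
    Sing G19 = {u : EuclideanSpace ℝ (Fin 3) | u 2 = 0} ∧
    Sing H19 = {x : EuclideanSpace ℝ (Fin 4) | x 2 = 0} ∧
    MilnorSet H19 = {x : EuclideanSpace ℝ (Fin 4) | x 2 = 0} ∪
      {x : EuclideanSpace ℝ (Fin 4) | x 3 = 0 ∧ (x 2) ^ 2 = (x 0) ^ 2 + (x 1) ^ 2} ∧
    Tame H19 := by
  refine ⟨?_, ?_, ?_, ?_, ?_⟩
  · funext x
    ext i
    fin_cases i <;> rfl
  · exact singG_eq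
  · exact singH_eq
  · exact milnorH_eq
  · refine ⟨1, one_pos, ?_⟩
    have hS : Sing H19 = {x : E4 | x 2 = 0} := singH_eq
    have hM : MilnorSet H19 = {x : E4 | x 2 = 0} ∪
      {x : E4 | x 3 = 0 ∧ (x 2) ^ 2 = (x 0) ^ 2 + (x 1) ^ 2} := milnorH_eq
    have hC : IsClosed {x : E4 | x 3 = 0 ∧ (x 2) ^ 2 = (x 0) ^ 2 + (x 1) ^ 2} := by
      have c0 : Continuous fun x : E4 => x 0 := (EuclideanSpace.proj (0 : Fin 4) : E4 →L[ℝ] ℝ).continuous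
      have c1 : Continuous fun x : E4 => x 1 := (EuclideanSpace.proj (1 : Fin 4) : E4 →L[ℝ] ℝ).continuous
      have c2 : Continuous fun x : E4 => x 2 := (EuclideanSpace.proj (2 : Fin 4) : E4 →L[ℝ] ℝ).continuous
      have c3 : Continuous fun x : E4 => x 3 := (EuclideanSpace.proj (3 : Fin 4) : E4 →L[ℝ] ℝ).continuous
      exact (isClosed_eq c3 continuous_const).inter
        (isClosed_eq (c2.pow 2) ((c0.pow 2).add (c1.pow 2)))
    have hsub : (MilnorSet H19 \ Sing H19) ∩ ball (0 : E4) 1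
        ⊆ {x : E4 | x 3 = 0 ∧ (x 2) ^ 2 = (x 0) ^ 2 + (x 1) ^ 2} := by
      intro p hp
      have hm : p ∈ MilnorSet H19 := hp.1.1
      have hns : p ∉ Sing H19 := hp.1.2
      rw [hM] at hm
      rcases hm with h | h
      · exact absurd (hS ▸ h : p ∈ Sing H19) hns
      · exact h
    intro p hp
    obtain ⟨⟨hcl, hsing⟩, _⟩ := hp
    have hpc : p ∈ {x : E4 | x 3 = 0 ∧ (x 2) ^ 2 = (x 0) ^ 2 + (x 1) ^ 2} :=
      closure_minimal hsub hC hcl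
    have hz : p 2 = 0 := by rw [hS] at hsing; exact hsing
    obtain ⟨hw, hc⟩ := hpc
    rw [hz] at hc
    have h0 : p 0 = 0 := by
      have : (p 0) ^ 2 = 0 := by nlinarith [sq_nonneg (p 0), sq_nonneg (p 1)]
      exact pow_eq_zero_iff two_ne_zero |>.mp this
    have h1 : p 1 = 0 := by
      have : (p 1) ^ 2 = 0 := by nlinarith [sq_nonneg (p 0), sq_nonneg (p 1)]
      exact pow_eq_zero_iff two_ne_zero |>.mp this
    show p = 0
    ext i
    fin_cases i
    · exact h0
    · exact h1
    · exact hz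
    · exact hw
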